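/- Let φ_Q, Q ∈ 𝒟_r, be a collection of functions such that: (1) φ_Q is supported on Q and is constant on each 𝒟_r-child of Q; (2) ‖φ_Q‖_∞ ≤ 1; (3) there exists δ ∈ (0,1) such that for every R ∈ 𝒟_r, |{x ∈ R : φ*_R(x) > 1}| ≤ δ|R|. Then for every R ∈ 𝒟_r and every t ≥ 0: |{x ∈ R : φ*_R(x) > t}| ≤ δ^{(t−1)/2}·|R|. -/

import Mathlib

open MeasureTheory Set
open scoped ENNReal NNReal Classical

noncomputable section

/-- The translation parameter space `Ω = ({0,1}^d)^ℤ` for random dyadic lattices. -/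
abbrev TransParam (d : ℕ) := ℤ → Fin d → Bool

/-- A dyadic cube: scale `k` (side length `2^k`) and integer position `m`. -/
structure DyadicCube (d : ℕ) where
  k : ℤ
  m : Fin d → ℤ

namespace DyadicCube

variable {d : ℕ}

/-- The translation vector `Σ_{j<k} ω_j 2^j` of the lattice `𝒟_ω` at generation `k`. -/
def shiftVec (ω : TransParam d) (k : ℤ) (i : Fin d) : ℝ :=
  ∑' j : {j : ℤ // j < k}, if ω j.1 i then (2:ℝ) ^ (j.1 : ℤ) else 0

/-- The point set of the cube `Q` in the translated dyadic lattice `𝒟_ω`. -/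
def set (ω : TransParam d) (Q : DyadicCube d) : Set (Fin d → ℝ) :=
  {x | ∀ i, (Q.m i : ℝ) * 2 ^ Q.k + shiftVec ω Q.k i ≤ x i ∧
            x i < ((Q.m i : ℝ) + 1) * 2 ^ Q.k + shiftVec ω Q.k i}

/-- Side length `ℓ(Q) = 2^k`. -/
def len (Q : DyadicCube d) : ℝ := 2 ^ Q.k

/-- Volume `|Q| = ℓ(Q)^d`. -/
def vol (Q : DyadicCube d) : ℝ := ((2:ℝ) ^ Q.k) ^ d

/-- The dyadic cube of generation `k` of `𝒟_ω` containing the point `x`. -/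
def cubeAt (ω : TransParam d) (k : ℤ) (x : Fin d → ℝ) : DyadicCube d :=
  ⟨k, fun i => ⌊(x i - shiftVec ω k i) / 2 ^ k⌋⟩

/-- The average of `f` on `Q` with respect to `μ` (zero if `μ(Q)` is zero or infinite). -/
def avg (ω : TransParam d) (μ : Measure (Fin d → ℝ)) (Q : DyadicCube d)
    (f : (Fin d → ℝ) → ℝ) : ℝ :=
  ((μ (Q.set ω)).toReal)⁻¹ * ∫ x in Q.set ω, f x ∂μ

/-- The conditional expectation `E^μ_Q f`. -/
def eproj (ω : TransParam d) (μ : Measure (Fin d → ℝ)) (Q : DyadicCube d)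
    (f : (Fin d → ℝ) → ℝ) : (Fin d → ℝ) → ℝ :=
  fun x => if x ∈ Q.set ω then avg ω μ Q f else 0

/-- The martingale difference `Δ^μ_Q f = -E^μ_Q f + Σ_{J ∈ ch(Q)} E^μ_J f`. -/
def mdiff (ω : TransParam d) (μ : Measure (Fin d → ℝ)) (Q : DyadicCube d)
    (f : (Fin d → ℝ) → ℝ) : (Fin d → ℝ) → ℝ :=
  fun x => if x ∈ Q.set ω then
      avg ω μ (cubeAt ω (Q.k - 1) x) f - avg ω μ Q f
    else 0

end DyadicCube

/-- `h` takes equal values at points lying in the same generation-`k` cube of `𝒟_ω`. -/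
def ConstOnScale {d : ℕ} (ω : TransParam d) (k : ℤ) (h : (Fin d → ℝ) → ℝ) : Prop :=
  ∀ x y : Fin d → ℝ, DyadicCube.cubeAt ω k x = DyadicCube.cubeAt ω k y → h x = h y

/-- A generalized Haar function for `Q`: supported on `Q` and constant on the children of `Q`. -/
def IsGenHaar {d : ℕ} (ω : TransParam d) (Q : DyadicCube d) (h : (Fin d → ℝ) → ℝ) : Prop :=
  (∀ x ∉ Q.set ω, h x = 0) ∧ ConstOnScale ω (Q.k - 1) h

/-- A `μ`-weighted Haar function for `Q`: an element of the range of `Δ^μ_Q` in `L²(μ)`,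
i.e. supported on `Q`, constant on the children of `Q`, with `μ`-mean zero. -/
def IsWeightedHaar {d : ℕ} (ω : TransParam d) (μ : Measure (Fin d → ℝ)) (Q : DyadicCube d)
    (h : (Fin d → ℝ) → ℝ) : Prop :=
  IsGenHaar ω Q h ∧ (∫ x, h x ∂μ) = 0 ∧ MemLp h 2 μ

/-- An elementary generalized dyadic shift with parameters `mm`, `nn` on the lattice `𝒟_ω`:
for each cube `Q` (in `cubes`) and each pair `Q' Q'' ⊆ Q` with `ℓ(Q') = 2^{-mm} ℓ(Q)`,
`ℓ(Q'') = 2^{-nn} ℓ(Q)`, a pair of generalized Haar functions `h1 Q Q' Q''` (for `Q'`)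
and `h2 Q Q' Q''` (for `Q''`) with `‖h1‖_∞ ⬝ ‖h2‖_∞ ≤ 1`. -/
structure ElemShift (d : ℕ) (ω : TransParam d) (mm nn : ℕ) where
  cubes : Set (DyadicCube d)
  h1 : DyadicCube d → DyadicCube d → DyadicCube d → (Fin d → ℝ) → ℝ
  h2 : DyadicCube d → DyadicCube d → DyadicCube d → (Fin d → ℝ) → ℝ
  haar1 : ∀ Q Q' Q'', IsGenHaar ω Q' (h1 Q Q' Q'')
  haar2 : ∀ Q Q' Q'', IsGenHaar ω Q'' (h2 Q Q' Q'')
  normBound : ∀ Q Q' Q'' x y, |h2 Q Q' Q'' x| * |h1 Q Q' Q'' y| ≤ 1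

namespace ElemShift

variable {d : ℕ} {ω : TransParam d} {mm nn : ℕ}

/-- The kernel `a_Q(x,y) = Σ_{Q',Q''} h_{Q''}^{Q'}(x) h_{Q'}^{Q''}(y)` (so `‖a_Q‖_∞ ≤ 1`);
only the pair `Q' ∋ y`, `Q'' ∋ x` of the prescribed generations contributes. -/
def kernelAt (S : ElemShift d ω mm nn) (Q : DyadicCube d) (x y : Fin d → ℝ) : ℝ :=
  if Q ∈ S.cubes ∧
     (DyadicCube.cubeAt ω (Q.k - mm) y).set ω ⊆ Q.set ω ∧
     (DyadicCube.cubeAt ω (Q.k - nn) x).set ω ⊆ Q.set ω then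
    S.h2 Q (DyadicCube.cubeAt ω (Q.k - mm) y) (DyadicCube.cubeAt ω (Q.k - nn) x) x *
      S.h1 Q (DyadicCube.cubeAt ω (Q.k - mm) y) (DyadicCube.cubeAt ω (Q.k - nn) x) y
  else 0

/-- The full kernel `A(x,y) = Σ_Q |Q|⁻¹ a_Q(x,y)`. -/
def kernel (S : ElemShift d ω mm nn) (x y : Fin d → ℝ) : ℝ :=
  ∑' Q : DyadicCube d, (DyadicCube.vol Q)⁻¹ * S.kernelAt Q x y

/-- `𝕊_μ f (x) = ∫ A(x,y) f(y) dμ(y)`. -/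
def op (S : ElemShift d ω mm nn) (μ : Measure (Fin d → ℝ)) (f : (Fin d → ℝ) → ℝ) :
    (Fin d → ℝ) → ℝ :=
  fun x => ∫ y, S.kernel x y * f y ∂μ

/-- `𝕊^*_ν g (y) = ∫ A(x,y) g(x) dν(x)`. -/
def opStar (S : ElemShift d ω mm nn) (ν : Measure (Fin d → ℝ)) (g : (Fin d → ℝ) → ℝ) :
    (Fin d → ℝ) → ℝ :=
  fun y => ∫ x, S.kernel x y * g x ∂ν

/-- The restricted shift `𝕊_𝒜`, keeping only the cubes in `𝒜`. -/
def opRestr (S : ElemShift d ω mm nn) (𝒜 : Set (DyadicCube d)) (μ : Measure (Fin d → ℝ))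
    (f : (Fin d → ℝ) → ℝ) : (Fin d → ℝ) → ℝ :=
  fun x => ∫ y, (∑' Q : DyadicCube d,
    if Q ∈ 𝒜 then (DyadicCube.vol Q)⁻¹ * S.kernelAt Q x y else 0) * f y ∂μ

/-- The shift is ordinary (non-generalized): all its Haar functions have mean zero. -/
def Ordinary (S : ElemShift d ω mm nn) : Prop :=
  ∀ Q Q' Q'', (∫ x, S.h1 Q Q' Q'' x) = 0 ∧ (∫ x, S.h2 Q Q' Q'' x) = 0

end ElemShift

/-- The axis-parallel cube with corner `c` and side length `ℓ`. -/
def stdCube {d : ℕ} (c : Fin d → ℝ) (ℓ : ℝ) : Set (Fin d → ℝ) :=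
  {x | ∀ i, c i ≤ x i ∧ x i < c i + ℓ}

/-- `A` is an `A₂` bound for the weight `w`:
`(|Q|⁻¹∫_Q w)(|Q|⁻¹∫_Q w⁻¹) ≤ A` for all cubes `Q`. -/
def A2BoundOn {d : ℕ} (w : (Fin d → ℝ) → ℝ) (A : ℝ) : Prop :=
  ∀ (c : Fin d → ℝ) (ℓ : ℝ), 0 < ℓ →
    (∫⁻ x in stdCube c ℓ, ENNReal.ofReal (w x)) *
      (∫⁻ x in stdCube c ℓ, ENNReal.ofReal ((w x)⁻¹)) ≤
      ENNReal.ofReal A * ENNReal.ofReal (ℓ ^ d) * ENNReal.ofReal (ℓ ^ d)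

/-- `A` is a joint `A₂` bound for the pair of measures `μ`, `ν`:
`(μ(I)/|I|)(ν(I)/|I|) ≤ A` for all cubes `I`. -/
def JointA2 {d : ℕ} (μ ν : Measure (Fin d → ℝ)) (A : ℝ) : Prop :=
  ∀ (c : Fin d → ℝ) (ℓ : ℝ), 0 < ℓ →
    μ (stdCube c ℓ) * ν (stdCube c ℓ) ≤
      ENNReal.ofReal A * ENNReal.ofReal (ℓ ^ d) * ENNReal.ofReal (ℓ ^ d)

/-- Distance between two sets. -/
def setDist {α : Type*} [PseudoMetricSpace α] (S T : Set α) : ℝ :=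
  sInf ((fun p : α × α => dist p.1 p.2) '' (S ×ˢ T))

/-- The long distance `D(Q,R) = dist(Q,R) + ℓ(Q) + ℓ(R)`. -/
def longDist {d : ℕ} (ω : TransParam d) (Q R : DyadicCube d) : ℝ :=
  setDist (Q.set ω) (R.set ω) + Q.len + R.len

/-- A cube `Q ∈ 𝒟_ω` is bad (with parameters `r₀`, `γ`) if there is a much bigger cube
`R ∈ 𝒟_ω` with `dist(Q,R) < ℓ(Q)^γ ℓ(R)^{1-γ}`. -/
def IsBad {d : ℕ} (r₀ : ℕ) (γ : ℝ) (ω : TransParam d) (Q : DyadicCube d) : Prop :=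
  ∃ R : DyadicCube d, Q.k + (r₀ : ℤ) < R.k ∧
    setDist (Q.set ω) (R.set ω) < Q.len ^ γ * R.len ^ (1 - γ)

/-- `P` is the product over `ℤ` of uniform measures on `{0,1}^d`. -/
def IsBernoulliProduct {d : ℕ} (P : Measure (TransParam d)) : Prop :=
  IsProbabilityMeasure P ∧
  ∀ (F : Finset (ℤ × Fin d)) (b : ℤ × Fin d → Bool),
    P {ω | ∀ p ∈ F, ω p.1 p.2 = b p} = (1 / 2 : ℝ≥0∞) ^ F.card

/-- A Calderón–Zygmund operator on `ℝ^d` with parameters `Ccz`, `α` and unweighted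
`L²` norm at most `normT`. -/
structure CZO (d : ℕ) (Ccz α normT : ℝ) where
  T : ((Fin d → ℝ) → ℝ) →ₗ[ℝ] ((Fin d → ℝ) → ℝ)
  K : (Fin d → ℝ) → (Fin d → ℝ) → ℝ
  l2bound : ∀ f, eLpNorm (T f) 2 volume ≤ ENNReal.ofReal normT * eLpNorm f 2 volume
  size : ∀ x y, x ≠ y → |K x y| ≤ Ccz / dist x y ^ d
  smooth : ∀ x x' y : Fin d → ℝ, dist x x' < dist x y / 2 →
    |K x y - K x' y| + |K y x - K y x'| ≤ Ccz * dist x x' ^ α / dist x y ^ ((d : ℝ) + α)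
  repr : ∀ f : (Fin d → ℝ) → ℝ, Measurable f → HasCompactSupport f →
    (∃ M, ∀ y, |f y| ≤ M) → ∀ x ∉ tsupport f, T f x = ∫ y, K x y * f y


/-- The weighted paraproduct `Π^μ = Π^μ_𝕊 : L²(μ) → L²(ν)`,
`Π^μ f = Σ_{Q∈𝒟} (E^μ_Q f) Σ_{R ⊆ Q, ℓ(R)=2^{-r}ℓ(Q)} Δ^ν_R 𝕊_μ 1_Q`. -/
def shiftPara {d : ℕ} {ω : TransParam d} {mm nn : ℕ} (S : ElemShift d ω mm nn)
    (μ ν : Measure (Fin d → ℝ)) (r : ℕ) (f : (Fin d → ℝ) → ℝ) : (Fin d → ℝ) → ℝ :=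
  fun x => ∑' Q : DyadicCube d,
    DyadicCube.eproj ω μ Q f x *
      DyadicCube.mdiff ω ν (DyadicCube.cubeAt ω (Q.k - r) x)
        (S.op μ (Set.indicator (Q.set ω) fun _ => (1:ℝ))) x

/-- The density `w(Q)/|Q|` of the weight `w` on the cube `Q`. -/
def dens {d : ℕ} (ω : TransParam d) (w : (Fin d → ℝ) → ℝ) (Q : DyadicCube d) : ℝ :=
  (∫ x in Q.set ω, w x) / Q.vol

/-- The maximal cubes `Q' ∈ 𝒬`, `Q' ⊆ Q`, with `w(Q')/|Q'| > 4 w(Q)/|Q|`: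
the stopping children of `Q`. -/
def stopNext {d : ℕ} (ω : TransParam d) (w : (Fin d → ℝ) → ℝ) (𝒬 : Set (DyadicCube d))
    (Q : DyadicCube d) : Set (DyadicCube d) :=
  {Q' | (Q' ∈ 𝒬 ∧ Q'.set ω ⊆ Q.set ω ∧ 4 * dens ω w Q < dens ω w Q') ∧
    ∀ Q'' : DyadicCube d, Q'' ∈ 𝒬 → Q''.set ω ⊆ Q.set ω → 4 * dens ω w Q < dens ω w Q'' →
      Q'.set ω ⊆ Q''.set ω → Q''.set ω ⊆ Q'.set ω}

/-- The generations of stopping cubes: `𝒢*₀ = {Q₀}`, and `𝒢*_{τ+1}` consists of the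
stopping children of the cubes of `𝒢*_τ`. -/
def stopGen {d : ℕ} (ω : TransParam d) (w : (Fin d → ℝ) → ℝ) (𝒬 : Set (DyadicCube d))
    (Q₀ : DyadicCube d) : ℕ → Set (DyadicCube d)
  | 0 => {Q₀}
  | (τ + 1) => {Q' | ∃ Q ∈ stopGen ω w 𝒬 Q₀ τ, Q' ∈ stopNext ω w 𝒬 Q}

/-- The stopping family `𝒢* = 𝒢*(Q₀) = ∪_τ 𝒢*_τ`. -/
def stopFam {d : ℕ} (ω : TransParam d) (w : (Fin d → ℝ) → ℝ) (𝒬 : Set (DyadicCube d))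
    (Q₀ : DyadicCube d) : Set (DyadicCube d) :=
  ⋃ τ : ℕ, stopGen ω w 𝒬 Q₀ τ

/-- `𝒫(R) = 𝒬(R) \ ∪_{R'∈𝒢*, R'⊊R} 𝒬(R')`. -/
def stopP {d : ℕ} (ω : TransParam d) (w : (Fin d → ℝ) → ℝ) (𝒬 : Set (DyadicCube d))
    (Q₀ R : DyadicCube d) : Set (DyadicCube d) :=
  {Q | Q ∈ 𝒬 ∧ Q.set ω ⊆ R.set ω ∧
    ∀ R' ∈ stopFam ω w 𝒬 Q₀, R'.set ω ⊂ R.set ω → ¬ Q.set ω ⊆ R'.set ω}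

/-- The good part `f_{good,ω} = Σ_{I ∈ 𝒟_ω, I good} Δ_I f` of a function. -/
def goodPart {d : ℕ} (r₀ : ℕ) (γ : ℝ) (ω : TransParam d) (f : (Fin d → ℝ) → ℝ) :
    (Fin d → ℝ) → ℝ :=
  fun x => ∑' k : ℤ,
    if IsBad r₀ γ ω (DyadicCube.cubeAt ω k x) then 0
    else DyadicCube.mdiff ω volume (DyadicCube.cubeAt ω k x) f x

/-- Conditioning: keep the coordinates `ω_j`, `j < k`, from `τ` and take the coordinates
`ω_j`, `j ≥ k`, from `ω`. -/
def splice {d : ℕ} (τ ω : TransParam d) (k : ℤ) : TransParam d :=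
  fun j => if j < k then τ j else ω j

/-- The event `A` depends only on the coordinates `ω_j`, `j < k`. -/
def DependsOnPast {d : ℕ} (k : ℤ) (A : Set (TransParam d)) : Prop :=
  ∀ ω ω' : TransParam d, (∀ j < k, ω j = ω' j) → (ω ∈ A ↔ ω' ∈ A)

/-- `U` is a generalized dyadic shift with parameters `mm`, `nn` on the lattice `𝒟_ω`:
a sum of at most `4^d` elementary generalized dyadic shifts. -/
def IsGenShiftOp {d : ℕ} (ω : TransParam d) (mm nn : ℕ)
    (U : ((Fin d → ℝ) → ℝ) → ((Fin d → ℝ) → ℝ)) : Prop :=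
  ∃ L : List (ElemShift d ω mm nn), L.length ≤ 4 ^ d ∧
    ∀ f x, U f x = (L.map fun S => S.op volume f x).sum

/-- `U` is an ordinary (non-generalized) dyadic shift with parameters `mm`, `nn`:
a sum of at most `4^d` elementary dyadic shifts built from mean-zero Haar functions. -/
def IsOrdShiftOp {d : ℕ} (ω : TransParam d) (mm nn : ℕ)
    (U : ((Fin d → ℝ) → ℝ) → ((Fin d → ℝ) → ℝ)) : Prop :=
  ∃ L : List (ElemShift d ω mm nn), L.length ≤ 4 ^ d ∧ (∀ S ∈ L, S.Ordinary) ∧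
    ∀ f x, U f x = (L.map fun S => S.op volume f x).sum

/-- The dyadic paraproduct `Π f = Σ_Q (E_Q f) b_Q` with symbol `b = (b_Q)_Q = (Δ_Q T1)_Q`. -/
def paraOp {d : ℕ} (ω : TransParam d) (b : DyadicCube d → (Fin d → ℝ) → ℝ)
    (f : (Fin d → ℝ) → ℝ) : (Fin d → ℝ) → ℝ :=
  fun x => ∑' Q : DyadicCube d, DyadicCube.eproj ω volume Q f x * b Q x

/-- The adjoint `Π^*` of the dyadic paraproduct with symbol `b`:
`Π^* f = Σ_Q 1_Q |Q|⁻¹ ∫ f b_Q`. -/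
def paraOpAdj {d : ℕ} (ω : TransParam d) (b : DyadicCube d → (Fin d → ℝ) → ℝ)
    (f : (Fin d → ℝ) → ℝ) : (Fin d → ℝ) → ℝ :=
  fun x => ∑' Q : DyadicCube d,
    Set.indicator (Q.set ω) (fun _ => (1:ℝ)) x * (DyadicCube.vol Q)⁻¹ * (∫ y, f y * b Q y)

/-- `b = (b_Q)_Q` is the family `(Δ_Q T1)_Q` for the operator with adjoint `Tadj`:
each `b_Q` is supported on `Q`, constant on the children of `Q`, has mean zero, and
satisfies the duality relation `⟨b_Q, g⟩ = ⟨1, Tadj Δ_Q g⟩`. -/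
def IsParaSymbol {d : ℕ} (ω : TransParam d)
    (Tadj : ((Fin d → ℝ) → ℝ) → ((Fin d → ℝ) → ℝ))
    (b : DyadicCube d → (Fin d → ℝ) → ℝ) : Prop :=
  ∀ Q : DyadicCube d, IsGenHaar ω Q (b Q) ∧ (∫ x, b Q x) = 0 ∧
    ∀ g : (Fin d → ℝ) → ℝ, Measurable g → HasCompactSupport g → (∃ M, ∀ y, |g y| ≤ M) →
      (∫ x, b Q x * g x) = ∫ x, Tadj (DyadicCube.mdiff ω volume Q g) x

/-- `Tstar` is the adjoint of `T` on (unweighted) `L²`. -/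
def IsAdjointPair {d : ℕ} (T Tstar : ((Fin d → ℝ) → ℝ) → ((Fin d → ℝ) → ℝ)) : Prop :=
  ∀ f g : (Fin d → ℝ) → ℝ, MemLp f 2 volume → MemLp g 2 volume →
    (∫ x, T f x * g x) = ∫ x, f x * Tstar g x

/-- `T̃_ω = T - Π^ω_T - (Π^ω_{T*})^*`, where `b` plays the role of `(Δ_Q T1)_Q` and
`bstar` the role of `(Δ_Q T^*1)_Q`. -/
def tildeOp {d : ℕ} {Ccz α normT : ℝ} (Op : CZO d Ccz α normT) (ω : TransParam d)
    (b bstar : DyadicCube d → (Fin d → ℝ) → ℝ) (f : (Fin d → ℝ) → ℝ) : (Fin d → ℝ) → ℝ :=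
  fun x => Op.T f x - paraOp ω b f x - paraOpAdj ω bstar f x


/-!
A good-`λ` argument. The cubes of `𝒟_r` containing a point form a tower, so `φ*_R(x)` is a
maximal partial sum of a sequence bounded by `1`, and the part of it over the ancestors of `Q`
is constant on `Q`. Stop at the maximal cubes `C ⊊ R` on which that partial sum exceeds `t`:
they are disjoint and lie in `{φ*_R > t}`, and since the partial sums jump by at most `1`,
the sum stays `≤ t + 1` on them. Hence `{φ*_R > t + 2} ∩ C ⊆ {φ*_C > 1}`, and the hypothesis
gives `|{φ*_R > t + 2}| ≤ δ |{φ*_R > t}|`; iterating from `t = 1` yields `δ^{(t-1)/2}`.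
-/

namespace DyadicCube

variable {d : ℕ} {ω : TransParam d}

instance : Countable (DyadicCube d) :=
  (Function.Injective.countable (f := fun Q : DyadicCube d => (Q.k, Q.m))
    fun ⟨_, _⟩ ⟨_, _⟩ h => by simpa using h)

def intIioEquivNat (k : ℤ) : ℕ ≃ {j : ℤ // j < k} where
  toFun n := ⟨k - 1 - n, by omega⟩
  invFun j := (k - 1 - j.1).toNat
  left_inv n := by simp
  right_inv j := Subtype.ext (by have := j.2; simp; omega)

lemma summable_shiftVec_terms (ω : TransParam d) (k : ℤ) (i : Fin d) :
    Summable fun j : {j : ℤ // j < k} => if ω j.1 i then (2 : ℝ) ^ j.1 else 0 := by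
  rw [← (intIioEquivNat k).summable_iff]
  refine (summable_geometric_two.mul_left ((2 : ℝ) ^ (k - 1))).of_nonneg_of_le
    (fun n => by simp only [Function.comp]; split_ifs <;> positivity) fun n => ?_
  have h2 : (2 : ℝ) ^ (k - 1 - (n : ℤ)) = (2 : ℝ) ^ (k - 1) * (1 / 2) ^ n := by
    rw [zpow_sub₀ two_ne_zero, zpow_natCast, one_div_pow, div_eq_mul_one_div]
  simp only [intIioEquivNat, Equiv.coe_fn_mk, Function.comp]
  by_cases hb : ω (k - 1 - n) i
  · simp only [hb, if_true, h2, le_refl]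
  · simp only [hb]; positivity

lemma shiftVec_eq_add_sum (ω : TransParam d) {k k' : ℤ} (h : k ≤ k') (i : Fin d) :
    shiftVec ω k' i = shiftVec ω k i + ∑ j ∈ Finset.Ico k k', if ω j i then (2 : ℝ) ^ j else 0 := by
  set g : ℤ → ℝ := fun j => if ω j i then (2 : ℝ) ^ j else 0
  have hunion : {j : ℤ | j < k} ∪ (Finset.Ico k k' : Set ℤ) = {j : ℤ | j < k'} := by
    ext; simp; omega
  have hdisj : Disjoint {j : ℤ | j < k} (Finset.Ico k k' : Set ℤ) :=
    Set.disjoint_left.2 fun a ha hb => by simp at ha hb; omega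
  have := Summable.tsum_union_disjoint (f := g) hdisj (summable_shiftVec_terms ω k i)
    ((Finset.Ico k k').finite_toSet.summable g)
  rw [hunion] at this
  exact this.trans (congrArg _ (Finset.tsum_subtype _ g))

lemma exists_shiftVec_eq_add_mul (ω : TransParam d) {k k' : ℤ} (h : k ≤ k') (i : Fin d) :
    ∃ n : ℤ, shiftVec ω k' i = shiftVec ω k i + n * 2 ^ k := by
  refine ⟨∑ j ∈ Finset.Ico k k', if ω j i then 2 ^ (j - k).toNat else 0, ?_⟩
  rw [shiftVec_eq_add_sum ω h, Int.cast_sum, Finset.sum_mul]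
  congr 1
  refine Finset.sum_congr rfl fun j hj => ?_
  rw [Finset.mem_Ico] at hj
  split_ifs
  · rw [Int.cast_pow, Int.cast_ofNat, ← zpow_natCast, Int.toNat_of_nonneg (by omega),
      ← zpow_add₀ two_ne_zero, sub_add_cancel]
  · simp

lemma mem_set_iff_cubeAt_eq {Q : DyadicCube d} {x : Fin d → ℝ} :
    x ∈ Q.set ω ↔ cubeAt ω Q.k x = Q := by
  obtain ⟨k, m⟩ := Q
  have hk : (0 : ℝ) < 2 ^ k := by positivity
  simp only [DyadicCube.set, cubeAt, mk.injEq, true_and, funext_iff, Int.floor_eq_iff,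
    le_div_iff₀ hk, div_lt_iff₀ hk, Set.mem_ofPred_eq]
  refine forall_congr' fun i => and_congr ?_ ?_ <;> constructor <;> intro h <;> linarith

lemma cubeAt_mem (ω : TransParam d) (k : ℤ) (x : Fin d → ℝ) : x ∈ (cubeAt ω k x).set ω :=
  mem_set_iff_cubeAt_eq.2 rfl

lemma exists_floor_eq (ω : TransParam d) {k k' : ℤ} (h : k ≤ k') (i : Fin d) :
    ∃ (n : ℤ) (p : ℕ), ∀ a : ℝ,
      ⌊(a - shiftVec ω k' i) / 2 ^ k'⌋ = (⌊(a - shiftVec ω k i) / 2 ^ k⌋ - n) / p := by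
  obtain ⟨n, hn⟩ := exists_shiftVec_eq_add_mul ω h i
  refine ⟨n, 2 ^ (k' - k).toNat, fun a => ?_⟩
  have hp : (2 : ℝ) ^ k' = 2 ^ k * ((2 ^ (k' - k).toNat : ℕ) : ℝ) := by
    rw [Nat.cast_pow, Nat.cast_ofNat, ← zpow_natCast, Int.toNat_of_nonneg (by omega),
      ← zpow_add₀ two_ne_zero, add_sub_cancel]
  rw [← Int.floor_sub_intCast, ← Int.floor_div_natCast, hn, hp]
  congr 1
  field_simp
  ring

lemma cubeAt_eq_cubeAt_of_le {k k' : ℤ} (h : k ≤ k') {x y : Fin d → ℝ}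
    (hxy : cubeAt ω k x = cubeAt ω k y) : cubeAt ω k' x = cubeAt ω k' y := by
  simp only [cubeAt, mk.injEq, true_and, funext_iff] at hxy ⊢
  intro i
  obtain ⟨n, p, hnp⟩ := exists_floor_eq ω h i
  rw [hnp, hnp, hxy i]

lemma eq_of_mem_of_k_eq {Q Q' : DyadicCube d} {x : Fin d → ℝ} (hx : x ∈ Q.set ω)
    (hx' : x ∈ Q'.set ω) (h : Q.k = Q'.k) : Q = Q' := by
  rw [mem_set_iff_cubeAt_eq] at hx hx'
  rw [← hx, ← hx', h]

lemma set_subset_of_k_le {Q Q' : DyadicCube d} (h : Q.k ≤ Q'.k) {x : Fin d → ℝ}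
    (hx : x ∈ Q.set ω) (hx' : x ∈ Q'.set ω) : Q.set ω ⊆ Q'.set ω := fun y hy => by
  rw [mem_set_iff_cubeAt_eq] at hx hx' hy ⊢
  rw [cubeAt_eq_cubeAt_of_le h (hy.trans hx.symm), hx']

lemma set_nonempty (ω : TransParam d) (Q : DyadicCube d) : (Q.set ω).Nonempty :=
  ⟨fun i => Q.m i * 2 ^ Q.k + shiftVec ω Q.k i, fun i =>
    ⟨le_rfl, by linarith [zpow_pos (two_pos (α := ℝ)) Q.k]⟩⟩

lemma set_eq_pi (ω : TransParam d) (Q : DyadicCube d) :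
    Q.set ω = Set.univ.pi fun i => Set.Ico ((Q.m i : ℝ) * 2 ^ Q.k + shiftVec ω Q.k i)
      (((Q.m i : ℝ) + 1) * 2 ^ Q.k + shiftVec ω Q.k i) := by
  ext; simp [DyadicCube.set]

lemma measurableSet_set (ω : TransParam d) (Q : DyadicCube d) : MeasurableSet (Q.set ω) := by
  rw [set_eq_pi]
  exact .univ_pi fun _ => measurableSet_Ico

lemma volume_set (ω : TransParam d) (Q : DyadicCube d) :
    volume (Q.set ω) = ENNReal.ofReal (2 ^ Q.k) ^ d := by
  simp [set_eq_pi, volume_pi_pi, Real.volume_Ico, add_mul]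

lemma k_lt_of_set_ssubset {Q Q' : DyadicCube d} (h : Q.set ω ⊂ Q'.set ω) : Q.k < Q'.k := by
  obtain ⟨x, hx⟩ := set_nonempty ω Q
  by_contra! hk
  exact h.2 (set_subset_of_k_le hk (h.1 hx) hx)

lemma k_le_of_set_subset (hd : 0 < d) {Q Q' : DyadicCube d} (h : Q.set ω ⊆ Q'.set ω) :
    Q.k ≤ Q'.k := by
  have hvol := measure_mono (μ := volume) h
  rw [volume_set, volume_set, ENNReal.pow_le_pow_left_iff hd.ne',
    ENNReal.ofReal_le_ofReal_iff (by positivity)] at hvol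
  exact (zpow_le_zpow_iff_right₀ one_lt_two).1 hvol

lemma set_ssubset_of_k_lt (hd : 0 < d) {Q Q' : DyadicCube d} (h : Q.set ω ⊆ Q'.set ω)
    (hk : Q.k < Q'.k) : Q.set ω ⊂ Q'.set ω :=
  ⟨h, fun h' => hk.not_ge (k_le_of_set_subset hd h')⟩

/-- The `2^r`-adic lattice `𝒟_r` of the cubes of side length `2^{j + rτ}`, `τ ∈ ℤ`. -/
def adicLattice (r : ℕ) (j : ℤ) : Set (DyadicCube d) := {Q | ∃ τ : ℤ, Q.k = j + r * τ}

section AdicLattice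

variable {r : ℕ} {j : ℤ} {Q R : DyadicCube d}

lemma exists_k_eq_add_mul (hQ : Q ∈ adicLattice r j) (hR : R ∈ adicLattice r j)
    (h : Q.k ≤ R.k) : ∃ N : ℕ, R.k = Q.k + r * N := by
  obtain ⟨τ, hτ⟩ := hQ
  obtain ⟨σ, hσ⟩ := hR
  rcases Nat.eq_zero_or_pos r with rfl | hr
  · exact ⟨0, by simp_all⟩
  · have : τ ≤ σ := le_of_mul_le_mul_left (a := (r : ℤ)) (by omega) (by exact_mod_cast hr)
    exact ⟨(σ - τ).toNat, by rw [Int.toNat_of_nonneg (by omega), hσ, hτ]; ring⟩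

lemma k_add_le_of_lt (hQ : Q ∈ adicLattice r j) (hR : R ∈ adicLattice r j) (h : Q.k < R.k) :
    Q.k + r ≤ R.k := by
  obtain ⟨N, hN⟩ := exists_k_eq_add_mul hQ hR h.le
  obtain _ | N := N
  · simp at hN; omega
  · rw [hN]; push_cast; nlinarith

lemma cubeAt_mem_adicLattice (hQ : Q ∈ adicLattice r j) (n : ℤ) (x : Fin d → ℝ) :
    cubeAt ω (Q.k + r * n) x ∈ adicLattice r j := by
  obtain ⟨τ, hτ⟩ := hQ
  exact ⟨τ + n, by rw [cubeAt, hτ]; ring⟩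

end AdicLattice

/-- `Σ_{R' ∈ L, Q ⊊ R' ⊆ R} φ_{R'}(x)`; its supremum over the cubes `Q ∋ x` of `L` is `φ*_R(x)`. -/
def ancestorSum (ω : TransParam d) (L : Set (DyadicCube d))
    (φ : DyadicCube d → (Fin d → ℝ) → ℝ) (R Q : DyadicCube d) (x : Fin d → ℝ) : ℝ :=
  ∑' R' : DyadicCube d, if R' ∈ L ∧ Q.set ω ⊂ R'.set ω ∧ R'.set ω ⊆ R.set ω then φ R' x else 0

section AncestorSum

variable {L : Set (DyadicCube d)} {φ : DyadicCube d → (Fin d → ℝ) → ℝ} {r : ℕ} {j : ℤ}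
  {Q C R : DyadicCube d} {x y : Fin d → ℝ}

lemma ancestorSum_eq_zero (h : ¬ Q.set ω ⊂ R.set ω) : ancestorSum ω L φ R Q x = 0 := by
  refine (tsum_congr fun R' => if_neg ?_).trans tsum_zero
  rintro ⟨-, hQR', hR'R⟩
  exact h (hQR'.trans_subset hR'R)

lemma set_ssubset_of_lt_abs_ancestorSum {t : ℝ} (ht : 0 ≤ t)
    (h : t < |ancestorSum ω L φ R Q x|) : Q.set ω ⊂ R.set ω := by
  by_contra hQR
  rw [ancestorSum_eq_zero hQR, abs_zero] at h
  exact h.not_ge ht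

lemma ancestorSum_eq_sum_range (hd : 0 < d) (hr : 0 < r) (hQ : Q ∈ adicLattice r j)
    {N : ℕ} (hN : R.k = Q.k + r * N) (hxQ : x ∈ Q.set ω) (hxR : x ∈ R.set ω) :
    ancestorSum ω (adicLattice r j) φ R Q x =
      ∑ n ∈ Finset.range N, φ (cubeAt ω (Q.k + r * (n + 1 : ℕ)) x) x := by
  set A : ℕ → DyadicCube d := fun n => cubeAt ω (Q.k + r * (n + 1 : ℕ)) x
  have hrz : (0 : ℤ) < r := by exact_mod_cast hr
  have hA : ∀ n, A n ∈ adicLattice r j ∧ x ∈ (A n).set ω ∧ Q.k < (A n).k := fun n =>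
    ⟨cubeAt_mem_adicLattice hQ _ x, cubeAt_mem ω _ x,
      lt_add_of_pos_right _ (by positivity)⟩
  have hinj : Set.InjOn A (Finset.range N) := fun n _ m _ h => by
    have := congrArg DyadicCube.k h
    simp only [A, cubeAt, add_right_inj, mul_eq_mul_left_iff, Nat.cast_inj] at this
    omega
  rw [ancestorSum, tsum_eq_sum (s := (Finset.range N).image A), Finset.sum_image hinj]
  · refine Finset.sum_congr rfl fun n hn => if_pos ⟨(hA n).1, ?_, ?_⟩
    · exact set_ssubset_of_k_lt hd (set_subset_of_k_le (hA n).2.2.le hxQ (hA n).2.1) (hA n).2.2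
    · refine set_subset_of_k_le ?_ (hA n).2.1 hxR
      simp only [A, cubeAt, hN, Finset.mem_range] at hn ⊢
      gcongr
      omega
  · intro R' hR'
    refine if_neg fun ⟨hR'L, hQR', hR'R⟩ => hR' ?_
    have hk := k_lt_of_set_ssubset hQR'
    obtain ⟨M, hM⟩ := exists_k_eq_add_mul hQ hR'L hk.le
    have hMN : M ≤ N := by
      have := k_le_of_set_subset hd hR'R
      rw [hM, hN] at this
      have : (M : ℤ) ≤ N := le_of_mul_le_mul_left (a := (r : ℤ)) (by linarith) hrz
      exact_mod_cast this
    obtain _ | M := M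
    · simp at hM; omega
    refine Finset.mem_image.2 ⟨M, Finset.mem_range.2 hMN, ?_⟩
    show cubeAt ω (Q.k + r * (M + 1 : ℕ)) x = R'
    rw [← hM]
    exact mem_set_iff_cubeAt_eq.1 (hQR'.1 hxQ)

lemma ancestorSum_eq_sum_range_of_subset (hd : 0 < d) (hr : 0 < r)
    (hQ : Q ∈ adicLattice r j) (hR : R ∈ adicLattice r j) (hQR : Q.set ω ⊆ R.set ω)
    (hxQ : x ∈ Q.set ω) : ∃ N : ℕ, R.k = Q.k + r * N ∧
      ancestorSum ω (adicLattice r j) φ R Q x =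
        ∑ n ∈ Finset.range N, φ (cubeAt ω (Q.k + r * (n + 1 : ℕ)) x) x := by
  obtain ⟨N, hN⟩ := exists_k_eq_add_mul hQ hR (k_le_of_set_subset hd hQR)
  exact ⟨N, hN, ancestorSum_eq_sum_range hd hr hQ hN hxQ (hQR hxQ)⟩

lemma ancestorSum_add (hd : 0 < d) (hr : 0 < r) (hQ : Q ∈ adicLattice r j)
    (hC : C ∈ adicLattice r j) (hR : R ∈ adicLattice r j) (hQC : Q.set ω ⊆ C.set ω)
    (hCR : C.set ω ⊆ R.set ω) (hx : x ∈ Q.set ω) :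
    ancestorSum ω (adicLattice r j) φ R Q x =
      ancestorSum ω (adicLattice r j) φ C Q x + ancestorSum ω (adicLattice r j) φ R C x := by
  obtain ⟨N₁, hN₁, hsQC⟩ := ancestorSum_eq_sum_range_of_subset (φ := φ) hd hr hQ hC hQC hx
  obtain ⟨N₂, hN₂, hsCR⟩ :=
    ancestorSum_eq_sum_range_of_subset (φ := φ) hd hr hC hR hCR (hQC hx)
  have hN : R.k = Q.k + r * (N₁ + N₂ : ℕ) := by rw [hN₂, hN₁]; push_cast; ring
  rw [ancestorSum_eq_sum_range hd hr hQ hN hx (hCR (hQC hx)), hsQC, hsCR, Finset.sum_range_add]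
  congr 2 with n
  rw [hN₁]
  push_cast
  ring_nf

lemma ancestorSum_parent (hd : 0 < d) (hr : 0 < r) (hC : C ∈ adicLattice r j)
    (hx : x ∈ C.set ω) :
    ancestorSum ω (adicLattice r j) φ (cubeAt ω (C.k + r) x) C x = φ (cubeAt ω (C.k + r) x) x := by
  rw [ancestorSum_eq_sum_range hd hr hC (N := 1) (by simp [cubeAt]) hx (cubeAt_mem ω _ x)]
  simp

lemma ancestorSum_congr (hd : 0 < d) (hr : 0 < r)
    (hconst : ∀ Q ∈ adicLattice r j, ConstOnScale ω (Q.k - r) (φ Q))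
    (hQ : Q ∈ adicLattice r j) (hR : R ∈ adicLattice r j) (hx : x ∈ Q.set ω)
    (hy : y ∈ Q.set ω) :
    ancestorSum ω (adicLattice r j) φ R Q x = ancestorSum ω (adicLattice r j) φ R Q y := by
  by_cases hQR : Q.set ω ⊆ R.set ω
  swap
  · rw [ancestorSum_eq_zero fun h => hQR h.1, ancestorSum_eq_zero fun h => hQR h.1]
  obtain ⟨N, hN, hsx⟩ := ancestorSum_eq_sum_range_of_subset (φ := φ) hd hr hQ hR hQR hx
  rw [hsx, ancestorSum_eq_sum_range hd hr hQ hN hy (hQR hy)]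
  refine Finset.sum_congr rfl fun n _ => ?_
  have hxy : cubeAt ω Q.k x = cubeAt ω Q.k y :=
    (mem_set_iff_cubeAt_eq.1 hx).trans (mem_set_iff_cubeAt_eq.1 hy).symm
  rw [cubeAt_eq_cubeAt_of_le (le_add_of_nonneg_right (by positivity)) hxy]
  refine hconst _ (cubeAt_mem_adicLattice hQ _ y) x y (cubeAt_eq_cubeAt_of_le ?_ hxy)
  simp only [cubeAt]
  push_cast
  nlinarith

end AncestorSum

/-- `{x ∈ R : φ*_R(x) > t}`. -/
def superlevelSet (ω : TransParam d) (L : Set (DyadicCube d))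
    (φ : DyadicCube d → (Fin d → ℝ) → ℝ) (R : DyadicCube d) (t : ℝ) : Set (Fin d → ℝ) :=
  {x | x ∈ R.set ω ∧ ∃ Q ∈ L, x ∈ Q.set ω ∧ t < |ancestorSum ω L φ R Q x|}

def stoppingCubes (ω : TransParam d) (L : Set (DyadicCube d))
    (φ : DyadicCube d → (Fin d → ℝ) → ℝ) (R : DyadicCube d) (t : ℝ) : Set (DyadicCube d) :=
  {C | C ∈ L ∧ C.set ω ⊂ R.set ω ∧ (∀ y ∈ C.set ω, t < |ancestorSum ω L φ R C y|) ∧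
    ∀ C' ∈ L, C.set ω ⊂ C'.set ω → C'.set ω ⊂ R.set ω →
      ∀ y ∈ C'.set ω, |ancestorSum ω L φ R C' y| ≤ t}

section Stopping

variable {L : Set (DyadicCube d)} {φ : DyadicCube d → (Fin d → ℝ) → ℝ} {r : ℕ} {j : ℤ}
  {R C : DyadicCube d} {t : ℝ} {x : Fin d → ℝ}

lemma antitone_superlevelSet : Antitone (superlevelSet ω L φ R) :=
  fun _ _ hst _ ⟨hxR, Q, hQ, hxQ, hlt⟩ => ⟨hxR, Q, hQ, hxQ, hst.trans_lt hlt⟩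

lemma biUnion_stoppingCubes_subset :
    ⋃ C ∈ stoppingCubes ω L φ R t, C.set ω ⊆ superlevelSet ω L φ R t := by
  simp only [Set.iUnion_subset_iff]
  exact fun C ⟨hC, hCR, hlt, _⟩ y hy => ⟨hCR.1 hy, C, hC, hy, hlt y hy⟩

lemma stoppingCubes_pairwiseDisjoint (hd : 0 < d) :
    (stoppingCubes ω L φ R t).PairwiseDisjoint (DyadicCube.set ω) := by
  suffices key : ∀ C ∈ stoppingCubes ω L φ R t, ∀ C' ∈ stoppingCubes ω L φ R t,
      ∀ z ∈ C.set ω, z ∈ C'.set ω → C.k ≤ C'.k → C = C' by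
    refine fun C hC C' hC' hne => Set.disjoint_left.2 fun z hz hz' => hne ?_
    rcases le_total C.k C'.k with hk | hk
    exacts [key C hC C' hC' z hz hz' hk, (key C' hC' C hC z hz' hz hk).symm]
  rintro C ⟨-, -, -, hmax⟩ C' ⟨hC', hC'R, hlt', -⟩ z hz hz' hk
  refine eq_of_mem_of_k_eq hz hz' (hk.antisymm ?_)
  by_contra! hlt
  obtain ⟨y, hy⟩ := set_nonempty ω C'
  exact (hmax C' hC' (set_ssubset_of_k_lt hd (set_subset_of_k_le hk hz hz') hlt) hC'R y hy).not_gt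
    (hlt' y hy)

/-- The stopping cube of `x` is the largest cube of the tower `cubeAt ω (Q.k + r n) x`,
`n ≤ N`, on which the sum exceeds `t`; the top one, `R`, carries the empty sum. -/
lemma exists_mem_stoppingCubes (hd : 0 < d) (hr : 0 < r)
    (hconst : ∀ Q ∈ adicLattice r j, ConstOnScale ω (Q.k - r) (φ Q))
    (hR : R ∈ adicLattice r j) (ht : 0 ≤ t) (hx : x ∈ superlevelSet ω (adicLattice r j) φ R t) :
    ∃ C ∈ stoppingCubes ω (adicLattice r j) φ R t, x ∈ C.set ω := by
  obtain ⟨hxR, Q, hQ, hxQ, hlt⟩ := hx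
  have hQR := set_ssubset_of_lt_abs_ancestorSum ht hlt
  obtain ⟨N, hN⟩ := exists_k_eq_add_mul hQ hR (k_lt_of_set_ssubset hQR).le
  set A : ℕ → DyadicCube d := fun n => cubeAt ω (Q.k + r * n) x
  set P : ℕ → Prop := fun n => t < |ancestorSum ω (adicLattice r j) φ R (A n) x|
  have hA : ∀ n, A n ∈ adicLattice r j ∧ x ∈ (A n).set ω := fun n =>
    ⟨cubeAt_mem_adicLattice hQ _ x, cubeAt_mem ω _ x⟩
  have hAN : A N = R := by simp only [A, ← hN]; exact mem_set_iff_cubeAt_eq.1 hxR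
  have hP0 : P 0 := by simpa [P, A, mem_set_iff_cubeAt_eq.1 hxQ] using hlt
  have hPN : ¬ P N := by
    simpa [P, hAN, ancestorSum_eq_zero (ssubset_irrefl (R.set ω))] using ht
  set m := Nat.findGreatest P N
  have hPm : P m := Nat.findGreatest_spec (Nat.zero_le N) hP0
  have hmN : m < N := (Nat.findGreatest_le N).lt_of_ne fun h => hPN (h ▸ hPm)
  have hAk : ∀ n, (A n).k = Q.k + r * n := fun n => rfl
  have hAR : ∀ n ≤ N, (A n).set ω ⊆ R.set ω := fun n hn =>
    set_subset_of_k_le (by rw [hAk, hN]; gcongr) (hA n).2 hxR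
  refine ⟨A m, ⟨(hA m).1, ?_, fun y hy => ?_, fun C' hC' hmC' hC'R y hy => ?_⟩, (hA m).2⟩
  · exact set_ssubset_of_k_lt hd (hAR m hmN.le) (by rw [hAk, hN]; gcongr)
  · rw [ancestorSum_congr hd hr hconst (hA m).1 hR hy (hA m).2]
    exact hPm
  · obtain ⟨n, hn⟩ := exists_k_eq_add_mul hQ hC'
      ((hAk m ▸ le_add_of_nonneg_right (by positivity)).trans (k_lt_of_set_ssubset hmC').le)
    have hC'A : A n = C' := by
      simp only [A, ← hn]
      exact mem_set_iff_cubeAt_eq.1 (hmC'.1 (hA m).2)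
    have hmn : m < n := by
      have := k_lt_of_set_ssubset hmC'
      rw [hAk, hn] at this
      have : (m : ℤ) < n := lt_of_mul_lt_mul_left (by linarith) (Nat.cast_nonneg (α := ℤ) r)
      exact_mod_cast this
    have hnN : n ≤ N := by
      have := k_le_of_set_subset hd hC'R.1
      rw [hn, hN] at this
      have : (n : ℤ) ≤ N := le_of_mul_le_mul_left (a := (r : ℤ)) (by linarith) (by omega)
      exact_mod_cast this
    rw [ancestorSum_congr hd hr hconst hC' hR hy (hC'A ▸ (hA n).2), ← hC'A]
    exact not_lt.1 (Nat.findGreatest_is_greatest hmn hnN)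

lemma abs_ancestorSum_le_of_mem_stoppingCubes (hd : 0 < d) (hr : 0 < r)
    (hbd : ∀ Q x, |φ Q x| ≤ 1) (hR : R ∈ adicLattice r j) (ht : 0 ≤ t)
    (hC : C ∈ stoppingCubes ω (adicLattice r j) φ R t) (hx : x ∈ C.set ω) :
    |ancestorSum ω (adicLattice r j) φ R C x| ≤ t + 1 := by
  obtain ⟨hCL, hCR, -, hmax⟩ := hC
  set P := cubeAt ω (C.k + r) x
  have hPL : P ∈ adicLattice r j := by simpa using cubeAt_mem_adicLattice hCL 1 x
  have hCP : C.set ω ⊂ P.set ω := set_ssubset_of_k_lt hd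
    (set_subset_of_k_le (by simp [P, cubeAt]) hx (cubeAt_mem ω _ x))
    (by simpa [P, cubeAt] using hr)
  have hPR : P.set ω ⊆ R.set ω := set_subset_of_k_le
    (k_add_le_of_lt hCL hR (k_lt_of_set_ssubset hCR)) (cubeAt_mem ω _ x) (hCR.1 hx)
  have hsum_P : |ancestorSum ω (adicLattice r j) φ R P x| ≤ t := by
    by_cases hPR' : P.set ω ⊂ R.set ω
    · exact hmax P hPL hCP hPR' x (hCP.1 hx)
    · rwa [ancestorSum_eq_zero hPR', abs_zero]
  rw [ancestorSum_add hd hr hCL hPL hR hCP.1 hPR hx, ancestorSum_parent hd hr hCL hx]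
  linarith [abs_add_le (φ P x) (ancestorSum ω (adicLattice r j) φ R P x), hbd P x]

lemma mem_superlevelSet_one_of_mem_stoppingCubes (hd : 0 < d) (hr : 0 < r)
    (hbd : ∀ Q x, |φ Q x| ≤ 1) (hR : R ∈ adicLattice r j) (ht : 0 ≤ t)
    (hC : C ∈ stoppingCubes ω (adicLattice r j) φ R t) (hxC : x ∈ C.set ω)
    (hx : x ∈ superlevelSet ω (adicLattice r j) φ R (t + 2)) :
    x ∈ superlevelSet ω (adicLattice r j) φ C 1 := by
  obtain ⟨-, Q, hQ, hxQ, hlt⟩ := hx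
  have hQR := set_ssubset_of_lt_abs_ancestorSum (by linarith) hlt
  have hC_le := abs_ancestorSum_le_of_mem_stoppingCubes hd hr hbd hR ht hC hxC
  obtain ⟨hCL, hCR, -, hmax⟩ := hC
  have hQC : Q.k < C.k := by
    by_contra! hk
    rcases hk.lt_or_eq with hk | hk
    · have hCQ := set_ssubset_of_k_lt hd (set_subset_of_k_le hk.le hxC hxQ) hk
      linarith [hmax Q hQ hCQ hQR x hxQ]
    · rw [eq_of_mem_of_k_eq hxQ hxC hk.symm] at hlt
      linarith
  have hQC' := set_subset_of_k_le hQC.le hxQ hxC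
  refine ⟨hxC, Q, hQ, hxQ, ?_⟩
  rw [ancestorSum_add hd hr hQ hCL hR hQC' hCR.1 hxQ] at hlt
  linarith [abs_add_le (ancestorSum ω (adicLattice r j) φ C Q x)
    (ancestorSum ω (adicLattice r j) φ R C x)]

lemma volume_superlevelSet_add_two_le (hd : 0 < d) (hr : 0 < r)
    (hconst : ∀ Q ∈ adicLattice r j, ConstOnScale ω (Q.k - r) (φ Q))
    (hbd : ∀ Q x, |φ Q x| ≤ 1) {δ : ℝ}
    (hδ : ∀ R ∈ adicLattice r j,
      volume (superlevelSet ω (adicLattice r j) φ R 1) ≤ ENNReal.ofReal δ * volume (R.set ω))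
    (hR : R ∈ adicLattice r j) (ht : 0 ≤ t) :
    volume (superlevelSet ω (adicLattice r j) φ R (t + 2)) ≤
      ENNReal.ofReal δ * volume (superlevelSet ω (adicLattice r j) φ R t) := by
  set G := stoppingCubes ω (adicLattice r j) φ R t
  have hcover : superlevelSet ω (adicLattice r j) φ R (t + 2) ⊆
      ⋃ C ∈ G, superlevelSet ω (adicLattice r j) φ C 1 := fun x hx => by
    obtain ⟨C, hC, hxC⟩ := exists_mem_stoppingCubes hd hr hconst hR ht
      (antitone_superlevelSet (by linarith) hx)
    exact Set.mem_biUnion hC (mem_superlevelSet_one_of_mem_stoppingCubes hd hr hbd hR ht hC hxC hx)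
  calc volume (superlevelSet ω (adicLattice r j) φ R (t + 2))
      ≤ ∑' C : G, volume (superlevelSet ω (adicLattice r j) φ C 1) :=
        (measure_mono hcover).trans (measure_biUnion_le _ G.to_countable _)
    _ ≤ ∑' C : G, ENNReal.ofReal δ * volume ((C : DyadicCube d).set ω) :=
        ENNReal.tsum_le_tsum fun C => hδ C C.2.1
    _ = ENNReal.ofReal δ * volume (⋃ C ∈ G, C.set ω) := by
        rw [ENNReal.tsum_mul_left, measure_biUnion G.to_countable
          (stoppingCubes_pairwiseDisjoint hd) fun C _ => measurableSet_set ω C]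
    _ ≤ ENNReal.ofReal δ * volume (superlevelSet ω (adicLattice r j) φ R t) :=
        mul_le_mul_right (measure_mono biUnion_stoppingCubes_subset) _

end Stopping

end DyadicCube

lemma Antitone.le_ofReal_rpow_mul {f : ℝ → ℝ≥0∞} {c : ℝ≥0∞} {δ : ℝ} (hf : Antitone f)
    (hδ0 : 0 < δ) (hδ1 : δ ≤ 1) (hc : f 0 ≤ c) (h1 : f 1 ≤ ENNReal.ofReal δ * c)
    (hstep : ∀ t, 0 ≤ t → f (t + 2) ≤ ENNReal.ofReal δ * f t) {t : ℝ} (ht : 0 ≤ t) :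
    f t ≤ ENNReal.ofReal (δ ^ ((t - 1) / 2)) * c := by
  have hodd : ∀ n : ℕ, f (2 * n + 1) ≤ ENNReal.ofReal δ ^ (n + 1) * c := by
    intro n
    induction n with
    | zero => simpa using h1
    | succ n ih =>
      calc f (2 * (n + 1 : ℕ) + 1) = f (2 * n + 1 + 2) := by push_cast; ring_nf
        _ ≤ ENNReal.ofReal δ * f (2 * n + 1) := hstep _ (by positivity)
        _ ≤ ENNReal.ofReal δ * (ENNReal.ofReal δ ^ (n + 1) * c) := by gcongr
        _ = ENNReal.ofReal δ ^ (n + 1 + 1) * c := by ring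
  rcases le_or_gt t 1 with h | h
  · calc f t ≤ c := (hf ht).trans hc
      _ ≤ ENNReal.ofReal (δ ^ ((t - 1) / 2)) * c := le_mul_of_one_le_left zero_le
        (ENNReal.one_le_ofReal.2 (Real.one_le_rpow_of_pos_of_le_one_of_nonpos hδ0 hδ1
          (by linarith)))
  · set n := ⌊(t - 1) / 2⌋₊
    have hn : (n : ℝ) ≤ (t - 1) / 2 := Nat.floor_le (by linarith)
    have hn' : (t - 1) / 2 < n + 1 := Nat.lt_floor_add_one _
    calc f t ≤ f (2 * n + 1) := hf (by linarith)
      _ ≤ ENNReal.ofReal δ ^ (n + 1) * c := hodd n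
      _ ≤ ENNReal.ofReal (δ ^ ((t - 1) / 2)) * c := by
        rw [← ENNReal.ofReal_pow hδ0.le, ← Real.rpow_natCast]
        exact mul_le_mul_left (ENNReal.ofReal_le_ofReal
          (Real.rpow_le_rpow_of_exponent_ge hδ0 hδ1 (by push_cast; linarith))) c

theorem statement18_general (d : ℕ) (hd : 0 < d) (ω : TransParam d) (r : ℕ) (hr : 1 ≤ r) (j : ℤ)
    (Dr : Set (DyadicCube d)) (hDr : Dr = {Q : DyadicCube d | ∃ τ : ℤ, Q.k = j + r * τ})
    (φ : DyadicCube d → (Fin d → ℝ) → ℝ)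
    (hconst : ∀ Q ∈ Dr, ConstOnScale ω (Q.k - r) (φ Q))
    (hbd : ∀ Q x, |φ Q x| ≤ 1)
    (δ : ℝ) (hδ0 : 0 < δ) (hδ1 : δ < 1)
    (h3 : ∀ R ∈ Dr,
      volume {x | x ∈ R.set ω ∧ ∃ Q ∈ Dr, x ∈ Q.set ω ∧
          1 < |∑' Rc : DyadicCube d,
            if Rc ∈ Dr ∧ Q.set ω ⊂ Rc.set ω ∧ Rc.set ω ⊆ R.set ω then φ Rc x else 0|} ≤
        ENNReal.ofReal δ * volume (R.set ω)) :
    ∀ R ∈ Dr, ∀ t : ℝ, 0 ≤ t →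
      volume {x | x ∈ R.set ω ∧ ∃ Q ∈ Dr, x ∈ Q.set ω ∧
          t < |∑' Rc : DyadicCube d,
            if Rc ∈ Dr ∧ Q.set ω ⊂ Rc.set ω ∧ Rc.set ω ⊆ R.set ω then φ Rc x else 0|} ≤
        ENNReal.ofReal (δ ^ ((t - 1) / 2)) * volume (R.set ω) := by
  subst hDr
  intro R hR t ht
  exact Antitone.le_ofReal_rpow_mul
    (f := fun t => volume (DyadicCube.superlevelSet ω (DyadicCube.adicLattice r j) φ R t))
    (fun _ _ hst => measure_mono (DyadicCube.antitone_superlevelSet hst)) hδ0 hδ1.le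
    (measure_mono fun _ hx => hx.1) (h3 R hR)
    (fun _ ht => DyadicCube.volume_superlevelSet_add_two_le hd hr hconst hbd h3 hR ht) ht

/-- **John–Nirenberg type estimate, Lemma 5.4.** Let `𝒟_r` be the `2^r`-adic
sublattice of cubes of side `2^{j+rτ}`, and let `(φ_Q)_{Q∈𝒟_r}` satisfy: `φ_Q` supported on
`Q` and constant on the `𝒟_r`-children of `Q`; `‖φ_Q‖_∞ ≤ 1`; and
`|{x ∈ R : φ*_R(x) > 1}| ≤ δ|R|` for all `R ∈ 𝒟_r`. Then
`|{x ∈ R : φ*_R(x) > t}| ≤ δ^{(t-1)/2}|R|` for all `R ∈ 𝒟_r` and `t ≥ 0`. -/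
theorem statement18 (d : ℕ) (hd : 0 < d) (ω : TransParam d) (r : ℕ) (hr : 1 ≤ r) (j : ℤ)
    (Dr : Set (DyadicCube d)) (hDr : Dr = {Q : DyadicCube d | ∃ τ : ℤ, Q.k = j + r * τ})
    (φ : DyadicCube d → (Fin d → ℝ) → ℝ)
    (hsupp : ∀ Q ∈ Dr, ∀ x ∉ Q.set ω, φ Q x = 0)
    (hconst : ∀ Q ∈ Dr, ConstOnScale ω (Q.k - r) (φ Q))
    (hbd : ∀ Q x, |φ Q x| ≤ 1)
    (δ : ℝ) (hδ0 : 0 < δ) (hδ1 : δ < 1)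
    (h3 : ∀ R ∈ Dr,
      volume {x | x ∈ R.set ω ∧ ∃ Q ∈ Dr, x ∈ Q.set ω ∧
          1 < |∑' Rc : DyadicCube d,
            if Rc ∈ Dr ∧ Q.set ω ⊂ Rc.set ω ∧ Rc.set ω ⊆ R.set ω then φ Rc x else 0|} ≤
        ENNReal.ofReal δ * volume (R.set ω)) :
    ∀ R ∈ Dr, ∀ t : ℝ, 0 ≤ t →
      volume {x | x ∈ R.set ω ∧ ∃ Q ∈ Dr, x ∈ Q.set ω ∧
          t < |∑' Rc : DyadicCube d,
            if Rc ∈ Dr ∧ Q.set ω ⊂ Rc.set ω ∧ Rc.set ω ⊆ R.set ω then φ Rc x else 0|} ≤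
        ENNReal.ofReal (δ ^ ((t - 1) / 2)) * volume (R.set ω) :=
  statement18_general d hd ω r hr j Dr hDr φ hconst hbd δ hδ0 hδ1 h3

end
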